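/- arXiv:2110.03881 — 8 statements merged into one kernel-verified Lean document; each statement's English description precedes it below -/
import Mathlib

section
/- Let {x, y, z} be any 3-element subset of U (i.e., x, y, z are pairwise distinct elements of U). Then for every i ∈ {1, 2, 3, 4, 5} one has x + i·y − (i+1)·z ≠ 0; in particular x+y−2z ≠ 0, x+2y−3z ≠ 0, x+3y−4z ≠ 0, x+4y−5z ≠ 0 and x+5y−6z ≠ 0. -/
/-- Lemma 1: for pairwise distinct (q+1)-th roots of unity x, y, z in a finite field
with 7^(2m) elements, x + i·y − (i+1)·z ≠ 0 for i = 1, …, 5. -/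
theorem stmt_0 {m : ℕ} (hm : 2 ≤ m) (q : ℕ) (hq : q = 7 ^ m)
    {E : Type*} [Field E] [Fintype E] (hE : Fintype.card E = q ^ 2)
    (x y z : E) (hx : x ^ (q + 1) = 1) (hy : y ^ (q + 1) = 1) (hz : z ^ (q + 1) = 1)
    (hxy : x ≠ y) (hxz : x ≠ z) (hyz : y ≠ z) :
    ∀ i ∈ Finset.Icc (1 : ℕ) 5, x + (i : E) * y - ((i : E) + 1) * z ≠ 0 := by
  -- characteristic of E is 7
  have hp : (ringChar E).Prime := CharP.char_is_prime E _
  obtain ⟨n, hpn, hn⟩ := FiniteField.card E (ringChar E)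
  have h7 : ringChar E = 7 := by
    have hdvd : ringChar E ∣ 7 ^ (2 * m) := by
      have hcard : Fintype.card E = 7 ^ (2 * m) := by
        rw [hE, hq, ← pow_mul, mul_comm]
      rw [hcard] at hn
      exact hn ▸ dvd_pow_self (ringChar E) (by positivity)
    have := (Nat.Prime.dvd_of_dvd_pow hp hdvd)
    exact (Nat.prime_dvd_prime_iff_eq hp (by norm_num)).mp this
  haveI hchar : CharP E 7 := h7 ▸ ringChar.charP E
  haveI : ExpChar E 7 := ExpChar.prime (by norm_num)
  intro i hi h1
  simp only [Finset.mem_Icc] at hi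
  -- nonzero
  have hx0 : x ≠ 0 := fun h => by simp [h, zero_pow, Nat.succ_ne_zero] at hx
  have hy0 : y ≠ 0 := fun h => by simp [h, zero_pow, Nat.succ_ne_zero] at hy
  have hz0 : z ≠ 0 := fun h => by simp [h, zero_pow, Nat.succ_ne_zero] at hz
  set c : E := (i : E) with hc
  set a := x ^ q with hadef
  set b := y ^ q with hbdef
  set d := z ^ q with hddef
  have ha : x * a = 1 := by rw [hadef, ← pow_succ']; exact hx
  have hb : y * b = 1 := by rw [hbdef, ← pow_succ']; exact hy
  have hd : z * d = 1 := by rw [hddef, ← pow_succ']; exact hz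
  -- apply Frobenius to h1
  have h2 : a + c * b - (c + 1) * d = 0 := by
    have := congrArg (iterateFrobenius E 7 m) h1
    simpa [iterateFrobenius_def, map_add, map_sub, map_mul, map_natCast, map_one,
      hadef, hbdef, hddef, hc, hq, mul_pow] using this
  have h2' : y * z + c * x * z - (c + 1) * (x * y) = 0 := by
    linear_combination x * y * z * h2 - y * z * ha - c * x * z * hb + (c + 1) * x * y * hd
  have key : c * (c + 1) * (y - z) ^ 2 = 0 := by
    linear_combination h2' + ((c + 1) * y - c * z) * h1
  have hc0 : c ≠ 0 := by
    rw [hc, Ne, CharP.cast_eq_zero_iff E 7]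
    omega
  have hc1 : c + 1 ≠ 0 := by
    have : ((i + 1 : ℕ) : E) ≠ 0 := by
      rw [Ne, CharP.cast_eq_zero_iff E 7]; omega
    simpa [hc] using this
  have := mul_ne_zero (mul_ne_zero hc0 hc1) (pow_ne_zero 2 (sub_ne_zero.mpr hyz))
  exact this key
end

section
/- For all x, y, z, w ∈ E, the determinant of the 4×4 matrix M(x,y,z,w) whose rows are (1,1,1,1), (x,y,z,w), (x⁷,y⁷,z⁷,w⁷), (x⁸,y⁸,z⁸,w⁸) equals (x−y)(x−z)(x−w)(y−z)(y−w)(z−w) · ∏_{i=1}^{5} ( xy + zw + i(xz + wy) + (6−i)(xw + yz) ). -/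
/-!
Subtracting the first column and then clearing the last row with the middle two reduces the
determinant to a `3 × 3` one in `a = y - x`, `b = z - x`, `c = w - x`; in characteristic `7` the
Frobenius gives `y ^ 7 - x ^ 7 = a ^ 7`, so the reduced matrix has rows `a`, `a ^ 7`, `a ^ 8`.
The quadratic factors are translation invariant modulo `7`, and the remaining identity in `a`, `b`,
`c` is a polynomial identity over `𝔽₇`.
-/

open Matrix

theorem det_fin_four_eq_det_fin_three_sub {R : Type*} [CommRing R] (x y z w X Y Z W : R) :
    det !![1, 1, 1, 1; x, y, z, w; X, Y, Z, W; x * X, y * Y, z * Z, w * W] =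
      det !![y - x, z - x, w - x; Y - X, Z - X, W - X;
        (y - x) * (Y - X), (z - x) * (Z - X), (w - x) * (W - X)] := by
  simp [det_succ_row_zero, Fin.sum_univ_succ, Fin.succAbove]
  ring

theorem det_fin_three_pow_seven_pow_eight {R : Type*} [CommRing R] [CharP R 7] (a b c : R) :
    det !![a, b, c; a ^ 7, b ^ 7, c ^ 7; a ^ 8, b ^ 8, c ^ 8] =
      -(a * b * c * (a - b) * (a - c) * (b - c) *
        ∏ i ∈ Finset.Icc (1 : ℕ) 5, (b * c + (i : R) * (c * a) + (6 - (i : R)) * (a * b))) := by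
  rw [det_fin_three, ← sub_eq_zero]
  simp only [of_apply, cons_val', cons_val_zero, cons_val_one, cons_val, cons_val_fin_one,
    Finset.prod_Icc_succ_top, Finset.Icc_self, Finset.prod_singleton, Nat.reduceAdd,
    Nat.one_le_ofNat, Nat.cast_one, Nat.cast_ofNat]
  ring_nf
  reduce_mod_char!

theorem quadratic_factor_eq_sub_of_seven_eq_zero {R : Type*} [CommRing R] (h7 : (7 : R) = 0)
    (t x y z w : R) :
    x * y + z * w + t * (x * z + w * y) + (6 - t) * (x * w + y * z) =
      (z - x) * (w - x) + t * ((w - x) * (y - x)) + (6 - t) * ((y - x) * (z - x)) := by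
  linear_combination x * (y + z + w - x) * h7

theorem det_fin_four_pow_seven_pow_eight {R : Type*} [CommRing R] [CharP R 7]
    (x y z w : R) :
    det !![(1 : R), 1, 1, 1; x, y, z, w; x ^ 7, y ^ 7, z ^ 7, w ^ 7; x ^ 8, y ^ 8, z ^ 8, w ^ 8] =
      (x - y) * (x - z) * (x - w) * (y - z) * (y - w) * (z - w) *
        ∏ i ∈ Finset.Icc (1 : ℕ) 5,
          (x * y + z * w + (i : R) * (x * z + w * y) + ((6 : R) - (i : R)) * (x * w + y * z)) := by
  have : Fact (Nat.Prime 7) := ⟨by norm_num⟩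
  have frobenius (u : R) : u ^ 7 - x ^ 7 = (u - x) ^ 7 := (sub_pow_char u x).symm
  simp only [pow_succ' _ 7]
  rw [det_fin_four_eq_det_fin_three_sub, frobenius, frobenius, frobenius, ← pow_succ',
    ← pow_succ', ← pow_succ', det_fin_three_pow_seven_pow_eight]
  rw [Finset.prod_congr rfl fun (i : ℕ) _ =>
    quadratic_factor_eq_sub_of_seven_eq_zero (CharP.cast_eq_zero R 7) (i : R) x y z w]
  ring

theorem stmt_2_general {m : ℕ} (q : ℕ) (hq : q = 7 ^ m)
    {E : Type*} [Field E] [Fintype E] (hE : Fintype.card E = q ^ 2)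
    (x y z w : E) :
    Matrix.det !![(1 : E), 1, 1, 1; x, y, z, w; x ^ 7, y ^ 7, z ^ 7, w ^ 7;
        x ^ 8, y ^ 8, z ^ 8, w ^ 8] =
      (x - y) * (x - z) * (x - w) * (y - z) * (y - w) * (z - w) *
        ∏ i ∈ Finset.Icc (1 : ℕ) 5,
          (x * y + z * w + (i : E) * (x * z + w * y) + ((6 : E) - (i : E)) * (x * w + y * z)) := by
  have : Fact (Nat.Prime 7) := ⟨by norm_num⟩
  have : CharP E 7 := charP_of_card_eq_prime_pow (f := m * 2) (by rw [hE, hq, pow_mul])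
  exact det_fin_four_pow_seven_pow_eight x y z w

/-- Lemma 3(1): factorization of the determinant of the 4×4 matrix M(x,y,z,w) over a
finite field with 7^(2m) elements. -/
theorem stmt_2 {m : ℕ} (hm : 2 ≤ m) (q : ℕ) (hq : q = 7 ^ m)
    {E : Type*} [Field E] [Fintype E] (hE : Fintype.card E = q ^ 2)
    (x y z w : E) :
    Matrix.det !![(1 : E), 1, 1, 1; x, y, z, w; x ^ 7, y ^ 7, z ^ 7, w ^ 7;
        x ^ 8, y ^ 8, z ^ 8, w ^ 8] =
      (x - y) * (x - z) * (x - w) * (y - z) * (y - w) * (z - w) *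
        ∏ i ∈ Finset.Icc (1 : ℕ) 5,
          (x * y + z * w + (i : E) * (x * z + w * y) + ((6 : E) - (i : E)) * (x * w + y * z)) :=
  stmt_2_general q hq hE x y z w
end

section
/- Let x, y, z be pairwise distinct elements of U. For i ∈ {1,2,3,4,5} set wᵢ = ((i−6)yz − xy − i·xz)/(z + i·y + (6−i)·x). Then for each i the denominator z + i·y + (6−i)·x is nonzero, wᵢ satisfies wᵢ^{q+1} = 1 (so wᵢ ∈ U), wᵢ ∉ {x, y, z}, and w₁, w₂, w₃, w₄, w₅ are pairwise distinct. -/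
/-- The element wᵢ from Lemma 3(2). -/
def wElem {E : Type*} [Field E] (x y z : E) (i : ℕ) : E :=
  (((i : E) - 6) * (y * z) - x * y - (i : E) * (x * z)) /
    (z + (i : E) * y + ((6 : E) - (i : E)) * x)

/-- Lemma 3(2), auxiliary part: the wᵢ are well defined, lie in U, avoid x, y, z,
and are pairwise distinct. -/
theorem stmt_3 {m : ℕ} (hm : 2 ≤ m) (q : ℕ) (hq : q = 7 ^ m)
    {E : Type*} [Field E] [Fintype E] (hE : Fintype.card E = q ^ 2)
    (x y z : E) (hx : x ^ (q + 1) = 1) (hy : y ^ (q + 1) = 1) (hz : z ^ (q + 1) = 1)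
    (hxy : x ≠ y) (hxz : x ≠ z) (hyz : y ≠ z) :
    (∀ i ∈ Finset.Icc (1 : ℕ) 5, z + (i : E) * y + ((6 : E) - (i : E)) * x ≠ 0) ∧
    (∀ i ∈ Finset.Icc (1 : ℕ) 5, (wElem x y z i) ^ (q + 1) = 1) ∧
    (∀ i ∈ Finset.Icc (1 : ℕ) 5, wElem x y z i ≠ x ∧ wElem x y z i ≠ y ∧ wElem x y z i ≠ z) ∧
    (∀ i ∈ Finset.Icc (1 : ℕ) 5, ∀ j ∈ Finset.Icc (1 : ℕ) 5, i ≠ j → wElem x y z i ≠ wElem x y z j) := by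
  -- characteristic 7
  have hm0 : m ≠ 0 := by omega
  have h7 : (7 : E) = 0 := by
    have h0 : ((Fintype.card E : ℕ) : E) = 0 := FiniteField.cast_card_eq_zero E
    rw [hE, hq] at h0
    push_cast at h0
    exact pow_eq_zero_iff hm0 |>.mp (pow_eq_zero_iff (two_ne_zero) |>.mp h0)
  haveI hC : CharP E 7 := by
    have hd : ringChar E ∣ 7 := ringChar.dvd (by exact_mod_cast h7)
    rcases (Nat.Prime.eq_one_or_self_of_dvd (by norm_num) _ hd) with h | h
    · exact absurd h CharP.ringChar_ne_one
    · exact ringChar.of_eq h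
  -- basic facts
  haveI : Fact (Nat.Prime 7) := ⟨by norm_num⟩
  have hq0 : q ≠ 0 := by rw [hq]; positivity
  have hF : ∀ a b : E, (a + b) ^ q = a ^ q + b ^ q := by
    intro a b; rw [hq]; exact add_pow_char_pow a b 7 m
  have hS : ∀ a b : E, (a - b) ^ q = a ^ q - b ^ q := by
    intro a b; rw [hq]; exact sub_pow_char_pow a b m
  have hN : ∀ n : ℕ, ((n : E)) ^ q = (n : E) := by
    intro n
    induction n with
    | zero => simp [zero_pow hq0]
    | succ k ih => push_cast; rw [hF, ih, one_pow]
  have h6q : (6 : E) ^ q = 6 := by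
    have := hN 6; push_cast at this; exact this
  have hx0 : x ≠ 0 := by intro h; rw [h, zero_pow (Nat.succ_ne_zero q)] at hx; exact one_ne_zero hx.symm
  have hy0 : y ≠ 0 := by intro h; rw [h, zero_pow (Nat.succ_ne_zero q)] at hy; exact one_ne_zero hy.symm
  have hz0 : z ≠ 0 := by intro h; rw [h, zero_pow (Nat.succ_ne_zero q)] at hz; exact one_ne_zero hz.symm
  have hxq : x ^ q = x⁻¹ := eq_inv_of_mul_eq_one_left (by rw [← pow_succ]; exact hx)
  have hyq : y ^ q = y⁻¹ := eq_inv_of_mul_eq_one_left (by rw [← pow_succ]; exact hy)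
  have hzq : z ^ q = z⁻¹ := eq_inv_of_mul_eq_one_left (by rw [← pow_succ]; exact hz)
  -- cast facts for i ∈ [1,5]
  have hcast0 : ∀ i : ℕ, 1 ≤ i → i ≤ 5 → (i : E) ≠ 0 := by
    intro i h1 h5 h
    have := (CharP.cast_eq_zero_iff E 7 i).mp h
    omega
  have hcast1 : ∀ i : ℕ, 1 ≤ i → i ≤ 5 → (i : E) + 1 ≠ 0 := by
    intro i h1 h5 h
    have h' : ((i + 1 : ℕ) : E) = 0 := by push_cast; exact h
    have := (CharP.cast_eq_zero_iff E 7 (i + 1)).mp h'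
    omega
  have hcastne : ∀ i j : ℕ, 1 ≤ i → i ≤ 5 → 1 ≤ j → j ≤ 5 → i ≠ j → (i : E) ≠ (j : E) := by
    intro i j hi1 hi5 hj1 hj5 hij h
    have := (CharP.natCast_eq_natCast E 7).mp h
    simp [Nat.ModEq] at this
    omega
  -- Frobenius of the denominator and numerator
  have hdenq : ∀ i : ℕ,
      (z + (i : E) * y + ((6 : E) - (i : E)) * x) ^ q = z⁻¹ + (i : E) * y⁻¹ + ((6 : E) - (i : E)) * x⁻¹ := by
    intro i
    rw [hF, hF, mul_pow, mul_pow, hS, hN i, h6q, hzq, hyq, hxq]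
  have hnumq : ∀ i : ℕ,
      (((i : E) - 6) * (y * z) - x * y - (i : E) * (x * z)) ^ q
        = ((i : E) - 6) * (y⁻¹ * z⁻¹) - x⁻¹ * y⁻¹ - (i : E) * (x⁻¹ * z⁻¹) := by
    intro i
    rw [hS, hS, mul_pow, mul_pow, mul_pow, mul_pow, mul_pow, hS, hN i, h6q,
      hxq, hyq, hzq]
  -- Part 1: denominators nonzero
  have part1 : ∀ i ∈ Finset.Icc (1 : ℕ) 5, z + (i : E) * y + ((6 : E) - (i : E)) * x ≠ 0 := by
    intro i hi h
    simp only [Finset.mem_Icc] at hi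
    have h2 : z⁻¹ + (i : E) * y⁻¹ + ((6 : E) - (i : E)) * x⁻¹ = 0 := by
      rw [← hdenq i, h, zero_pow hq0]
    have h2' : x * y + (i : E) * (x * z) + ((6 : E) - (i : E)) * (y * z) = 0 := by
      calc x * y + (i : E) * (x * z) + ((6 : E) - (i : E)) * (y * z)
          = (z⁻¹ + (i : E) * y⁻¹ + ((6 : E) - (i : E)) * x⁻¹) * (x * y * z) := by
            field_simp
        _ = 0 := by rw [h2, zero_mul]
    have key : (i : E) * (y - z) ^ 2 = 0 := by
      linear_combination (y + (i : E) * z) * h - ((6 : E) - (i : E)) * h2'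
        - (2 * (i : E) - 5) * y * z * h7
    rcases mul_eq_zero.mp key with h' | h'
    · exact hcast0 i hi.1 hi.2 h'
    · exact hyz (sub_eq_zero.mp (pow_eq_zero_iff two_ne_zero |>.mp h'))
  refine ⟨part1, ?_, ?_, ?_⟩
  -- Part 2: wᵢ ∈ U
  · intro i hi
    have hden := part1 i hi
    simp only [Finset.mem_Icc] at hi
    set N : E := ((i : E) - 6) * (y * z) - x * y - (i : E) * (x * z) with hN'
    set D : E := z + (i : E) * y + ((6 : E) - (i : E)) * x with hD'
    have hDq : D ^ q = -N * (x * y * z)⁻¹ := by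
      rw [hdenq i]
      field_simp
      ring
    have hNq : N ^ q = -D * (x * y * z)⁻¹ := by
      rw [hnumq i]
      field_simp
      ring
    have hNne : N ≠ 0 := by
      intro h
      apply hden
      have : N ^ q = 0 := by rw [h, zero_pow hq0]
      rw [hNq] at this
      rcases mul_eq_zero.mp this with h' | h'
      · exact neg_eq_zero.mp h'
      · exact absurd h' (inv_ne_zero (by simp [hx0, hy0, hz0]))
    have : wElem x y z i = N / D := rfl
    rw [this, pow_succ, div_pow, hNq, hDq]
    have hxyz : x * y * z ≠ 0 := by simp [hx0, hy0, hz0]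
    field_simp
  -- Part 3: wᵢ ∉ {x, y, z}
  · intro i hi
    have hden := part1 i hi
    simp only [Finset.mem_Icc] at hi
    refine ⟨?_, ?_, ?_⟩
    · simp only [wElem]
      rw [ne_eq, div_eq_iff hden]
      intro h
      have key : ((i : E) + 1) * ((x - y) * (x - z)) = 0 := by
        linear_combination h + (y * z + x ^ 2) * h7
      rcases mul_eq_zero.mp key with h' | h'
      · exact hcast1 i hi.1 hi.2 h'
      · rcases mul_eq_zero.mp h' with h'' | h''
        · exact hxy (sub_eq_zero.mp h'')
        · exact hxz (sub_eq_zero.mp h'')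
    · simp only [wElem]
      rw [ne_eq, div_eq_iff hden]
      intro h
      have key : (i : E) * ((y - x) * (z - y)) = 0 := by
        linear_combination h + (y * z + x * y) * h7
      rcases mul_eq_zero.mp key with h' | h'
      · exact hcast0 i hi.1 hi.2 h'
      · rcases mul_eq_zero.mp h' with h'' | h''
        · exact hxy (sub_eq_zero.mp h'').symm
        · exact hyz (sub_eq_zero.mp h'').symm
    · simp only [wElem]
      rw [ne_eq, div_eq_iff hden]
      intro h
      have key : (z - x) * (y - z) = 0 := by
        linear_combination h + (y * z + x * z) * h7
      rcases mul_eq_zero.mp key with h' | h'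
      · exact hxz (sub_eq_zero.mp h').symm
      · exact hyz (sub_eq_zero.mp h')
  -- Part 4: pairwise distinct
  · intro i hi j hj hij
    have hdi := part1 i hi
    have hdj := part1 j hj
    simp only [Finset.mem_Icc] at hi hj
    simp only [wElem]
    rw [ne_eq, div_eq_div_iff hdi hdj]
    intro h
    have key : ((j : E) - (i : E)) * ((z - x) * ((y - x) * (y - z))) = 0 := by
      linear_combination h - ((i : E) - (j : E)) * z * (y ^ 2 - x ^ 2) * h7
    rcases mul_eq_zero.mp key with h' | h'
    · exact hcastne j i hj.1 hj.2 hi.1 hi.2 (Ne.symm hij) (sub_eq_zero.mp h')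
    · rcases mul_eq_zero.mp h' with h'' | h''
      · exact hxz (sub_eq_zero.mp h'').symm
      · rcases mul_eq_zero.mp h'' with h3 | h3
        · exact hxy (sub_eq_zero.mp h3).symm
        · exact hyz (sub_eq_zero.mp h3)
end

section
/- Let x, y, z be pairwise distinct elements of U. Then the set { w ∈ U \ {x,y,z} : det M(x,y,z,w) = 0 } has exactly 5 elements, where M(x,y,z,w) is the 4×4 matrix with rows (1,1,1,1), (x,y,z,w), (x⁷,y⁷,z⁷,w⁷), (x⁸,y⁸,z⁸,w⁸). Equivalently, there are exactly 5 elements w ∈ U \ {x,y,z} with ∏_{i=1}^{5} ( xy + zw + i(xz + wy) + (6−i)(xw + yz) ) = 0. -/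
/-!
Subtracting suitable multiples of the first row, the determinant with rows `1, a, aᵖ, aᵖ⁺¹`
becomes, in characteristic `p`, a `3 × 3` determinant in `a - x` and `(a - x)ᵖ`. In the
coordinate `t = (a - x)⁻¹`, which sends `x` to `∞`, it equals
`((y - x)(z - x)(w - x))ᵖ⁺¹ (s_zᵖ s_w - s_z s_wᵖ)` with `s_a = t_a - t_y`, so for
`w ∉ {x, y, z}` it vanishes iff the cross ratio `r = s_z / s_w` satisfies `rᵖ = r`, i.e. lies
in `𝔽_p`.

Since `a ↦ a^q` inverts the elements of `U`, in the coordinate `t` the circle `U` becomes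
an `𝔽_q`-affine line not passing through `0`. That line contains every affine combination
of `t_y` and `t_z` with coefficients in `𝔽_p`, so each `r ∈ 𝔽_p \ {0, 1}` is the cross
ratio of exactly one `w ∈ U \ {x, y, z}`, giving `p - 2 = 5` solutions.
-/

theorem det_rows_one_id_mul {R : Type*} [CommRing R] (x y z w X Y Z W : R) :
    Matrix.det !![1, 1, 1, 1; x, y, z, w; X, Y, Z, W; x * X, y * Y, z * Z, w * W] =
      (y - x) * (Z - X) * (W - X) * ((w - x) - (z - x)) +
      (z - x) * (Y - X) * (W - X) * ((y - x) - (w - x)) +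
      (w - x) * (Y - X) * (Z - X) * ((z - x) - (y - x)) := by
  simp only [Matrix.det_succ_row_zero, Fin.sum_univ_succ, Fin.sum_univ_zero]
  simp [Fin.succAbove, Fin.lt_def]
  ring

theorem RingHom.map_eq_self_of_mem_bot {D : Type*} [DivisionRing D] (σ : D →+* D) {r : D}
    (hr : r ∈ (⊥ : Subfield D)) : σ r = r :=
  (bot_le : ⊥ ≤ σ.eqLocusField (RingHom.id D)) hr

section

variable {K : Type*} [Field K]

def frobeniusDet (p : ℕ) (x y z w : K) : K :=
  Matrix.det !![1, 1, 1, 1; x, y, z, w; x ^ p, y ^ p, z ^ p, w ^ p;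
    x ^ (p + 1), y ^ (p + 1), z ^ (p + 1), w ^ (p + 1)]

/-- The cross ratio `(w - x)(z - y) / ((w - y)(z - x))`, written in the coordinate
`(· - x)⁻¹`. -/
def crossRatio (x y z w : K) : K :=
  ((z - x)⁻¹ - (y - x)⁻¹) / ((w - x)⁻¹ - (y - x)⁻¹)

def pointOfCrossRatio (x y z r : K) : K :=
  x + ((y - x)⁻¹ + r⁻¹ * ((z - x)⁻¹ - (y - x)⁻¹))⁻¹

theorem inv_sub_sub_inv_sub_ne_zero {x a b : K} (h : a ≠ b) : (a - x)⁻¹ - (b - x)⁻¹ ≠ 0 :=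
  sub_ne_zero.2 (inv_injective.ne (sub_left_injective.ne h))

theorem frobeniusDet_eq (p : ℕ) [Fact p.Prime] [CharP K p] {x y z w : K}
    (hy : y ≠ x) (hz : z ≠ x) (hw : w ≠ x) :
    frobeniusDet p x y z w = ((y - x) * (z - x) * (w - x)) ^ (p + 1) *
      (((z - x)⁻¹ - (y - x)⁻¹) ^ p * ((w - x)⁻¹ - (y - x)⁻¹) -
        ((z - x)⁻¹ - (y - x)⁻¹) * ((w - x)⁻¹ - (y - x)⁻¹) ^ p) := by
  have hB {a : K} (ha : a ≠ x) : a ^ p - x ^ p ≠ 0 := by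
    rw [← sub_pow_char]
    exact pow_ne_zero p (sub_ne_zero.2 ha)
  have := sub_ne_zero.2 hy
  have := sub_ne_zero.2 hz
  have := sub_ne_zero.2 hw
  have := hB hy
  have := hB hz
  have := hB hw
  simp only [frobeniusDet, pow_succ' _ p, det_rows_one_id_mul, mul_pow, inv_pow, sub_pow_char]
  field_simp
  ring

theorem frobeniusDet_eq_zero_iff (p : ℕ) [Fact p.Prime] [CharP K p] {x y z w : K}
    (hxy : x ≠ y) (hxz : x ≠ z) (hxw : x ≠ w) (hyw : y ≠ w) :
    frobeniusDet p x y z w = 0 ↔ crossRatio x y z w ^ p = crossRatio x y z w := by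
  have hsw := inv_sub_sub_inv_sub_ne_zero (x := x) hyw.symm
  rw [frobeniusDet_eq p hxy.symm hxz.symm hxw.symm, mul_eq_zero, or_iff_right, sub_eq_zero,
    crossRatio, div_pow, div_eq_div_iff (pow_ne_zero p hsw) hsw]
  exact pow_ne_zero _ (by simp [sub_eq_zero, hxy.symm, hxz.symm, hxw.symm])

theorem crossRatio_ne_zero {x y z w : K} (hyz : y ≠ z) (hyw : y ≠ w) :
    crossRatio x y z w ≠ 0 :=
  div_ne_zero (inv_sub_sub_inv_sub_ne_zero hyz.symm) (inv_sub_sub_inv_sub_ne_zero hyw.symm)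

theorem crossRatio_ne_one {x y z w : K} (hyw : y ≠ w) (hzw : z ≠ w) :
    crossRatio x y z w ≠ 1 := by
  rw [crossRatio, Ne, div_eq_one_iff_eq (inv_sub_sub_inv_sub_ne_zero hyw.symm), sub_left_inj]
  exact inv_injective.ne (sub_left_injective.ne hzw)

theorem crossRatio_eq_iff {x y z w r : K} (hyz : y ≠ z) (hr : r ≠ 0) :
    crossRatio x y z w = r ↔ w = pointOfCrossRatio x y z r := by
  have hsz := inv_sub_sub_inv_sub_ne_zero (x := x) hyz.symm
  rw [pointOfCrossRatio, ← sub_eq_iff_eq_add', ← inv_eq_iff_eq_inv, crossRatio]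
  generalize (y - x)⁻¹ = a, (z - x)⁻¹ = b, (w - x)⁻¹ = c at *
  constructor
  · rintro rfl
    have hca : c - a ≠ 0 := fun h0 => hr (by rw [h0, div_zero])
    field_simp
    ring
  · rintro rfl
    rw [add_sub_cancel_left, div_mul_cancel_right₀ hsz, inv_inv]

theorem crossRatio_pointOfCrossRatio {x y z r : K} (hyz : y ≠ z) (hr : r ≠ 0) :
    crossRatio x y z (pointOfCrossRatio x y z r) = r :=
  (crossRatio_eq_iff hyz hr).2 rfl

/-- For `σ x * x = 1`, the image of the circle `{a | σ a * a = 1}` under `a ↦ (a - x)⁻¹`. -/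
def inversionLine (σ : K →+* K) (x : K) : Set K := {t | σ t + x ^ 2 * t + x = 0}

section inversionLine

variable {σ : K →+* K} {x : K}

theorem inv_sub_mem_inversionLine (hx : σ x * x = 1) {a : K} (ha : σ a * a = 1) (hax : a ≠ x) :
    (a - x)⁻¹ ∈ inversionLine σ x := by
  have := right_ne_zero_of_mul_eq_one hx
  have := right_ne_zero_of_mul_eq_one ha
  have := sub_ne_zero.2 hax
  have := sub_ne_zero.2 (inv_injective.ne hax)
  simp only [inversionLine, Set.mem_ofPred_eq, map_inv₀, map_sub, eq_inv_of_mul_eq_one_left hx,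
    eq_inv_of_mul_eq_one_left ha]
  field_simp
  ring

theorem zero_notMem_inversionLine (hx : σ x * x = 1) : 0 ∉ inversionLine σ x := by
  simpa [inversionLine] using right_ne_zero_of_mul_eq_one hx

theorem map_mul_self_of_mem_inversionLine (hx : σ x * x = 1) {t : K}
    (ht : t ∈ inversionLine σ x) (ht0 : t ≠ 0) : σ (x + t⁻¹) * (x + t⁻¹) = 1 := by
  have hx0 : x ≠ 0 := right_ne_zero_of_mul_eq_one hx
  have hσt : σ t = -(x * (x * t + 1)) := by
    rw [inversionLine, Set.mem_ofPred_eq] at ht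
    linear_combination ht
  have hxt : x * t + 1 ≠ 0 := fun h => ht0 (by simpa [h] using hσt)
  rw [map_add, map_inv₀, hσt, eq_inv_of_mul_eq_one_left hx]
  field_simp
  ring

theorem add_mul_sub_mem_inversionLine {c t₁ t₂ : K} (hc : σ c = c)
    (h₁ : t₁ ∈ inversionLine σ x) (h₂ : t₂ ∈ inversionLine σ x) :
    t₁ + c * (t₂ - t₁) ∈ inversionLine σ x := by
  simp only [inversionLine, Set.mem_ofPred_eq, map_add, map_mul, map_sub, hc] at *
  linear_combination (1 - c) * h₁ + c * h₂

end inversionLine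

section count

variable (p : ℕ) [Fact p.Prime] [CharP K p] (σ : K →+* K) {x y z : K}

theorem ncard_primeSubfield_diff_zero_one :
    (((⊥ : Subfield K) : Set K) \ {0, 1}).ncard = p - 2 := by
  rw [Set.ncard_sdiff (by simp [Set.insert_subset_iff, zero_mem, one_mem]),
    Set.ncard_pair zero_ne_one, ← Nat.card_coe_set_eq, SetLike.coe_sort_coe, Subfield.card_bot]

theorem pointOfCrossRatio_mem (hx : σ x * x = 1) (hy : σ y * y = 1) (hz : σ z * z = 1)
    (hxy : x ≠ y) (hxz : x ≠ z) (hyz : y ≠ z) {r : K}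
    (hr : r ∈ ((⊥ : Subfield K) : Set K) \ {0, 1}) :
    σ (pointOfCrossRatio x y z r) * pointOfCrossRatio x y z r = 1 ∧
      pointOfCrossRatio x y z r ≠ x ∧ pointOfCrossRatio x y z r ≠ y ∧
      pointOfCrossRatio x y z r ≠ z ∧ frobeniusDet p x y z (pointOfCrossRatio x y z r) = 0 := by
  have hr0 : r ≠ 0 := fun h => hr.2 (Or.inl h)
  have hcr := crossRatio_pointOfCrossRatio (x := x) hyz hr0
  have hline : (y - x)⁻¹ + r⁻¹ * ((z - x)⁻¹ - (y - x)⁻¹) ∈ inversionLine σ x :=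
    add_mul_sub_mem_inversionLine (σ.map_eq_self_of_mem_bot (inv_mem hr.1))
      (inv_sub_mem_inversionLine hx hy hxy.symm) (inv_sub_mem_inversionLine hx hz hxz.symm)
  have hline0 : (y - x)⁻¹ + r⁻¹ * ((z - x)⁻¹ - (y - x)⁻¹) ≠ 0 := fun h =>
    zero_notMem_inversionLine hx (h ▸ hline)
  have hwx : pointOfCrossRatio x y z r ≠ x := add_ne_left.2 (inv_ne_zero hline0)
  have hwy : pointOfCrossRatio x y z r ≠ y := fun h =>
    hr0 (by rw [← hcr, h, crossRatio, sub_self, div_zero])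
  have hwz : pointOfCrossRatio x y z r ≠ z := fun h => hr.2 (Or.inr (by
    rw [Set.mem_singleton_iff, ← hcr, h, crossRatio,
      div_self (inv_sub_sub_inv_sub_ne_zero hyz.symm)]))
  refine ⟨map_mul_self_of_mem_inversionLine hx hline hline0, hwx, hwy, hwz,
    (frobeniusDet_eq_zero_iff p hxy hxz hwx.symm hwy.symm).2 ?_⟩
  rw [hcr]
  exact (Subfield.mem_bot_iff_pow_eq_self K p).1 hr.1

theorem setOf_frobeniusDet_eq_zero_eq_image (hx : σ x * x = 1) (hy : σ y * y = 1)
    (hz : σ z * z = 1) (hxy : x ≠ y) (hxz : x ≠ z) (hyz : y ≠ z) :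
    {w | σ w * w = 1 ∧ w ≠ x ∧ w ≠ y ∧ w ≠ z ∧ frobeniusDet p x y z w = 0} =
      pointOfCrossRatio x y z '' (((⊥ : Subfield K) : Set K) \ {0, 1}) := by
  ext w
  constructor
  · rintro ⟨-, hwx, hwy, hwz, hdet⟩
    have hr : crossRatio x y z w ∈ ((⊥ : Subfield K) : Set K) \ {0, 1} := by
      refine ⟨(Subfield.mem_bot_iff_pow_eq_self K p).2
        ((frobeniusDet_eq_zero_iff p hxy hxz hwx.symm hwy.symm).1 hdet), ?_⟩
      rintro (h | h)
      exacts [crossRatio_ne_zero hyz hwy.symm h, crossRatio_ne_one hwy.symm hwz.symm h]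
    exact ⟨_, hr, ((crossRatio_eq_iff hyz fun h => hr.2 (Or.inl h)).1 rfl).symm⟩
  · rintro ⟨r, hr, rfl⟩
    exact pointOfCrossRatio_mem p σ hx hy hz hxy hxz hyz hr

theorem ncard_setOf_frobeniusDet_eq_zero (hx : σ x * x = 1) (hy : σ y * y = 1)
    (hz : σ z * z = 1) (hxy : x ≠ y) (hxz : x ≠ z) (hyz : y ≠ z) :
    {w | σ w * w = 1 ∧ w ≠ x ∧ w ≠ y ∧ w ≠ z ∧ frobeniusDet p x y z w = 0}.ncard = p - 2 := by
  have hcr {r : K} (hr : r ∈ ((⊥ : Subfield K) : Set K) \ {0, 1}) :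
      crossRatio x y z (pointOfCrossRatio x y z r) = r :=
    crossRatio_pointOfCrossRatio (x := x) hyz fun h => hr.2 (Or.inl h)
  rw [setOf_frobeniusDet_eq_zero_eq_image p σ hx hy hz hxy hxz hyz, Set.InjOn.ncard_image,
    ncard_primeSubfield_diff_zero_one]
  intro r₁ h₁ r₂ h₂ h
  rw [← hcr h₁, ← hcr h₂, h]

end count

end

theorem stmt_4_general {m : ℕ} (q : ℕ) (hq : q = 7 ^ m)
    {E : Type*} [Field E] [Fintype E] (hE : Fintype.card E = q ^ 2)
    (x y z : E) (hx : x ^ (q + 1) = 1) (hy : y ^ (q + 1) = 1) (hz : z ^ (q + 1) = 1)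
    (hxy : x ≠ y) (hxz : x ≠ z) (hyz : y ≠ z) :
    {w : E | w ^ (q + 1) = 1 ∧ w ≠ x ∧ w ≠ y ∧ w ≠ z ∧
      Matrix.det !![(1 : E), 1, 1, 1; x, y, z, w; x ^ 7, y ^ 7, z ^ 7, w ^ 7;
        x ^ 8, y ^ 8, z ^ 8, w ^ 8] = 0}.ncard = 5 := by
  have : Fact (Nat.Prime 7) := ⟨by norm_num⟩
  have : CharP E 7 := charP_of_card_eq_prime_pow (hE.trans (by rw [hq, ← pow_mul]))
  have hσ (a : E) : iterateFrobenius E 7 m a * a = a ^ (q + 1) := by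
    rw [iterateFrobenius_def, hq, pow_succ]
  have key := ncard_setOf_frobeniusDet_eq_zero 7 (iterateFrobenius E 7 m)
    ((hσ x).trans hx) ((hσ y).trans hy) ((hσ z).trans hz) hxy hxz hyz
  simp only [hσ] at key
  exact key

/-- Lemma 3(2): for pairwise distinct x, y, z ∈ U there are exactly five
w ∈ U \ {x,y,z} with det M(x,y,z,w) = 0. -/
theorem stmt_4 {m : ℕ} (hm : 2 ≤ m) (q : ℕ) (hq : q = 7 ^ m)
    {E : Type*} [Field E] [Fintype E] (hE : Fintype.card E = q ^ 2)
    (x y z : E) (hx : x ^ (q + 1) = 1) (hy : y ^ (q + 1) = 1) (hz : z ^ (q + 1) = 1)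
    (hxy : x ≠ y) (hxz : x ≠ z) (hyz : y ≠ z) :
    {w : E | w ^ (q + 1) = 1 ∧ w ≠ x ∧ w ≠ y ∧ w ≠ z ∧
      Matrix.det !![(1 : E), 1, 1, 1; x, y, z, w; x ^ 7, y ^ 7, z ^ 7, w ^ 7;
        x ^ 8, y ^ 8, z ^ 8, w ^ 8] = 0}.ncard = 5 :=
  stmt_4_general q hq hE x y z hx hy hz hxy hxz hyz
end

section
/- Let (a,b) ∈ E × E with (a,b) ≠ (0,0), and define f : U → E by f(u) = Tr(au⁴ + bu³). Then the zero set Zero(f) = { u ∈ U : f(u) = 0 } has at most 8 elements. -/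
open Polynomial

/-- Lemma 4, first part: the zero set of f(u) = Tr(au⁴ + bu³) on U has at most 8
elements when (a, b) ≠ (0, 0). -/
theorem stmt_5 {m : ℕ} (hm : 2 ≤ m) (q : ℕ) (hq : q = 7 ^ m)
    {E : Type*} [Field E] [Fintype E] (hE : Fintype.card E = q ^ 2)
    (a b : E) (hab : ¬(a = 0 ∧ b = 0)) :
    {u : E | u ^ (q + 1) = 1 ∧
      (a * u ^ 4 + b * u ^ 3) + (a * u ^ 4 + b * u ^ 3) ^ q = 0}.ncard ≤ 8 := by
  classical
  -- characteristic 7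
  have h70 : (7 : E) = 0 := by
    have hc : ((Fintype.card E : ℕ) : E) = 0 := Nat.cast_card_eq_zero E
    rw [hE, hq] at hc
    push_cast at hc
    have : (7 : E) ^ (m * 2) ≠ 0 → False := fun h => h (by rw [pow_mul]; exact hc)
    by_contra h7
    exact this (pow_ne_zero _ h7)
  have hdvd : ringChar E ∣ 7 := (CharP.cast_eq_zero_iff E (ringChar E) 7).mp (by exact_mod_cast h70)
  have hp : Nat.Prime (ringChar E) := CharP.char_is_prime E (ringChar E)
  have hchar : ringChar E = 7 := (Nat.prime_dvd_prime_iff_eq hp (by norm_num)).mp hdvd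
  haveI : CharP E 7 := hchar ▸ ringChar.charP E
  haveI : Fact (Nat.Prime 7) := ⟨by norm_num⟩
  haveI : ExpChar E 7 := ExpChar.prime (by norm_num)
  set φ : E →+* E := iterateFrobenius E 7 m with hφ
  have hφval : ∀ x : E, φ x = x ^ q := fun x => by
    rw [hφ, iterateFrobenius_def, hq]
  -- the polynomial
  set P : E[X] := C a * X ^ 8 + C b * X ^ 7 + C (a ^ q) + C (b ^ q) * X with hP
  have hPne : P ≠ 0 := by
    rcases (not_and_or.mp hab) with ha | hb
    · intro h
      have : P.coeff 8 = a := by simp only [hP, coeff_add, coeff_C_mul, coeff_X_pow, coeff_C, coeff_X]; norm_num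
      rw [h] at this; simp at this; exact ha this.symm
    · intro h
      have : P.coeff 7 = b := by simp only [hP, coeff_add, coeff_C_mul, coeff_X_pow, coeff_C, coeff_X]; norm_num
      rw [h] at this; simp at this; exact hb this.symm
  have hdeg : P.natDegree ≤ 8 := by
    rw [hP]; compute_degree
  -- zero set is contained in roots of P
  have hsub : {u : E | u ^ (q + 1) = 1 ∧
      (a * u ^ 4 + b * u ^ 3) + (a * u ^ 4 + b * u ^ 3) ^ q = 0}
      ⊆ ↑P.roots.toFinset := by
    rintro u ⟨hu, hf⟩
    have h1 : u ^ q * u = 1 := by rw [← pow_succ]; exact hu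
    have hq' : (a * u ^ 4 + b * u ^ 3) ^ q
        = a ^ q * (u ^ q) ^ 4 + b ^ q * (u ^ q) ^ 3 := by
      rw [← hφval, map_add, map_mul, map_mul, map_pow, map_pow, hφval, hφval, hφval]
    rw [hq'] at hf
    have hv4 : (u ^ q) ^ 4 * u ^ 4 = 1 := by rw [← mul_pow, h1, one_pow]
    have hv3 : (u ^ q) ^ 3 * u ^ 3 = 1 := by rw [← mul_pow, h1, one_pow]
    have key : a * u ^ 8 + b * u ^ 7 + a ^ q + b ^ q * u = 0 := by
      linear_combination u ^ 4 * hf - a ^ q * hv4 - b ^ q * u * hv3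
    simp only [Multiset.mem_toFinset, Finset.coe_sort_coe, Set.mem_setOf_eq,
      Finset.mem_coe]
    rw [mem_roots hPne]
    simp only [IsRoot.def, hP, eval_add, eval_mul, eval_C, eval_pow, eval_X]
    exact key
  calc {u : E | u ^ (q + 1) = 1 ∧
      (a * u ^ 4 + b * u ^ 3) + (a * u ^ 4 + b * u ^ 3) ^ q = 0}.ncard
      ≤ (↑P.roots.toFinset : Set E).ncard :=
        Set.ncard_le_ncard hsub (P.roots.toFinset.finite_toSet)
    _ = P.roots.toFinset.card := Set.ncard_coe_finset _
    _ ≤ Multiset.card P.roots := P.roots.toFinset_card_le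
    _ ≤ P.natDegree := P.card_roots'
    _ ≤ 8 := hdeg
end

section
/- Let (a,b) ∈ E × E with (a,b) ≠ (0,0), and define f : U → E by f(u) = Tr(au⁴ + bu³). If the zero set Zero(f) = { u ∈ U : f(u) = 0 } has at least 3 elements, then it has exactly 8 elements. -/
/-!
On the unit circle `u ^ (q + 1) = 1`, `Tr(a u⁴ + b u³) = 0` is equivalent (after multiplying by
`u⁴` and using `u ^ q = u⁻¹`) to `a u⁸ + b u⁷ + b^q u + a^q = 0`, i.e. to the Frobenius-semilinear
eigen-equation `M w = λ w⁽⁷⁾` for `w = (u, 1)`, `λ = a u + b` and `M = [[-b^q, -a^q], [a, b]]`.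
The degenerate cases `a = 0` and `a^(q+1) = b^(q+1)` (i.e. `det M = 0`) have at most two zeros.
Otherwise, for fixed `λ ≠ 0` the solutions of `M w = λ w⁽⁷⁾` form an `𝔽₇`-vector space, and a
third zero makes it the `𝔽₇`-span of two `E`-independent vectors; the zero set is then its
projectivisation `ℙ¹(𝔽₇)`, with `8` points. That these points lie on the unit circle comes from
iterating the equation `m` times: the twisted product `M^(7^(m-1)) ⋯ M^(7) M` sends every zero
`(u, 1)` to a multiple of `(u^q, 1) = (u⁻¹, 1)`, so three zeros force it to be antidiagonal, and
then every solution `w` satisfies `w₀^(q+1) = w₁^(q+1)`.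
-/

open Matrix Finset

theorem ncard_setOf_pow_char_eq_self (K : Type*) [Field K] (p : ℕ) [Fact p.Prime]
    [CharP K p] : {x : K | x ^ p = x}.ncard = p := by
  have h : {x : K | x ^ p = x} = ((⊥ : Subfield K) : Set K) := by
    ext x
    exact (Subfield.mem_bot_iff_pow_eq_self K p).symm
  rw [h, ← Nat.card_coe_set_eq, SetLike.coe_sort_coe, Subfield.card_bot]

section TwistedProd

variable {R n : Type*} [CommSemiring R] [Fintype n] [DecidableEq n]

def twistedProd (σ : R →+* R) (M : Matrix n n R) : ℕ → Matrix n n R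
  | 0 => 1
  | k + 1 => M.map (σ ^ k) * twistedProd σ M k

theorem twistedProd_mulVec {σ : R →+* R} {M : Matrix n n R} {c : R} {w : n → R}
    (h : M *ᵥ w = c • (σ ∘ w)) (k : ℕ) :
    twistedProd σ M k *ᵥ w = (∏ i ∈ range k, (σ ^ i) c) • ((σ ^ k) ∘ w) := by
  induction k with
  | zero => simp [twistedProd]
  | succ k ih =>
    have hk : M.map (σ ^ k) *ᵥ ((σ ^ k) ∘ w) = (σ ^ k) c • ((σ ^ (k + 1)) ∘ w) := by
      funext i
      rw [← RingHom.map_mulVec, h]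
      simp [pow_succ]
    rw [twistedProd, ← mulVec_mulVec, ih, mulVec_smul, hk, smul_smul, prod_range_succ]

end TwistedProd

section Semilinear

variable {K n : Type*} [Field K] [Fintype n] {σ : K →+* K} {M : Matrix n n K}

theorem mulVec_smul_eq_smul_comp {v : n → K} {c₁ c x : K} (hv : M *ᵥ v = c₁ • (σ ∘ v))
    (hx : x * c₁ = c * σ x) : M *ᵥ (x • v) = c • (σ ∘ (x • v)) := by
  have hσ : σ ∘ (x • v) = σ x • (σ ∘ v) := by
    funext i
    simp
  rw [mulVec_smul, hv, hσ, smul_smul, hx, smul_smul]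

theorem mulVec_add_eq_smul_comp {v₁ v₂ : n → K} {c₁ c₂ c x y : K}
    (h₁ : M *ᵥ v₁ = c₁ • (σ ∘ v₁)) (h₂ : M *ᵥ v₂ = c₂ • (σ ∘ v₂))
    (hx : x * c₁ = c * σ x) (hy : y * c₂ = c * σ y) :
    M *ᵥ (x • v₁ + y • v₂) = c • (σ ∘ (x • v₁ + y • v₂)) := by
  have hσ : σ ∘ (x • v₁ + y • v₂) = σ ∘ (x • v₁) + σ ∘ (y • v₂) := by
    funext i
    simp
  rw [mulVec_add, mulVec_smul_eq_smul_comp h₁ hx, mulVec_smul_eq_smul_comp h₂ hy, hσ, smul_add]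

theorem mulVec_add_eq_smul_comp_iff {v₁ v₂ : n → K} {c₁ c₂ : K}
    (h₁ : M *ᵥ v₁ = c₁ • (σ ∘ v₁)) (h₂ : M *ᵥ v₂ = c₂ • (σ ∘ v₂))
    (hind : LinearIndependent K ![σ ∘ v₁, σ ∘ v₂]) {c x y : K} :
    M *ᵥ (x • v₁ + y • v₂) = c • (σ ∘ (x • v₁ + y • v₂)) ↔
      x * c₁ = c * σ x ∧ y * c₂ = c * σ y := by
  refine ⟨fun h => ?_, fun ⟨hx, hy⟩ => mulVec_add_eq_smul_comp h₁ h₂ hx hy⟩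
  have hσ : σ ∘ (x • v₁ + y • v₂) = σ x • (σ ∘ v₁) + σ y • (σ ∘ v₂) := by
    funext i
    simp
  have hdiff : (x * c₁ - c * σ x) • (σ ∘ v₁) + (y * c₂ - c * σ y) • (σ ∘ v₂) = 0 := by
    rw [← sub_eq_zero.mpr h, mulVec_add, mulVec_smul, mulVec_smul, h₁, h₂, hσ]
    module
  obtain ⟨hx, hy⟩ := LinearIndependent.pair_iff.mp hind _ _ hdiff
  exact ⟨sub_eq_zero.mp hx, sub_eq_zero.mp hy⟩

end Semilinear

theorem linearIndependent_comp_smul_vecCons_one {K : Type*} [Field K] (σ : K →+* K)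
    {s x y : K} (hs : s ≠ 0) (hxy : x ≠ y) :
    LinearIndependent K ![σ ∘ (s • ![x, 1]), σ ∘ ![y, 1]] := by
  refine LinearIndependent.pair_iff.mpr fun t₁ t₂ ht => ?_
  have h0 := congrFun ht 0
  have h1 := congrFun ht 1
  simp only [Pi.add_apply, Pi.smul_apply, Function.comp_apply, cons_val_zero, cons_val_one,
    smul_eq_mul, mul_one, map_mul, map_one, Pi.zero_apply] at h0 h1
  have ht₁ : t₁ * σ s * (σ x - σ y) = 0 := by linear_combination h0 - σ y * h1
  have ht₁0 : t₁ = 0 := by simpa [hs, sub_eq_zero, σ.injective.ne hxy] using ht₁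
  exact ⟨ht₁0, by linear_combination h1 - σ s * ht₁0⟩

theorem eq_zero_of_three_roots {R : Type*} [CommRing R] [IsDomain R] {c₀ c₁ c₂ u₁ u₂ u₃ : R}
    (h12 : u₁ ≠ u₂) (h13 : u₁ ≠ u₃) (h23 : u₂ ≠ u₃)
    (h₁ : c₂ * u₁ ^ 2 + c₁ * u₁ + c₀ = 0) (h₂ : c₂ * u₂ ^ 2 + c₁ * u₂ + c₀ = 0)
    (h₃ : c₂ * u₃ ^ 2 + c₁ * u₃ + c₀ = 0) : c₂ = 0 ∧ c₁ = 0 ∧ c₀ = 0 := by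
  have e12 : (u₁ - u₂) * (c₂ * (u₁ + u₂) + c₁) = 0 := by linear_combination h₁ - h₂
  have e13 : (u₁ - u₃) * (c₂ * (u₁ + u₃) + c₁) = 0 := by linear_combination h₁ - h₃
  replace e12 := (mul_eq_zero.mp e12).resolve_left (sub_ne_zero.mpr h12)
  replace e13 := (mul_eq_zero.mp e13).resolve_left (sub_ne_zero.mpr h13)
  have e23 : c₂ * (u₂ - u₃) = 0 := by linear_combination e12 - e13
  have hc₂ := (mul_eq_zero.mp e23).resolve_right (sub_ne_zero.mpr h23)
  have hc₁ : c₁ = 0 := by linear_combination e12 - (u₁ + u₂) * hc₂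
  exact ⟨hc₂, hc₁, by linear_combination h₁ - u₁ ^ 2 * hc₂ - u₁ * hc₁⟩

theorem smul_vecCons_one_add_smul {R : Type*} [Semiring R] (x y u₁ u₂ : R) :
    x • ![u₁, 1] + y • ![u₂, 1] = ![x * u₁ + y * u₂, x + y] := by
  simp only [smul_cons, smul_eq_mul, mul_one, Matrix.smul_empty, cons_add_cons, empty_add_empty]

section Mobius

variable {K : Type*} [Field K]

-- The point `[ω • γ (u₁, 1) + (u₂, 1)]` of the projective line; `u₁` is the image of `ω = ∞`.
def mobius (γ u₁ u₂ ω : K) : K := (ω * γ * u₁ + u₂) / (ω * γ + 1)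

theorem ncard_insert_image_mobius {γ u₁ u₂ : K} (hγ : γ ≠ 0) (h12 : u₁ ≠ u₂) {S : Set K}
    (hS : S.Finite) (hden : ∀ ω ∈ S, ω * γ + 1 ≠ 0) :
    (insert u₁ (mobius γ u₁ u₂ '' S)).ncard = S.ncard + 1 := by
  have hd : u₁ - u₂ ≠ 0 := sub_ne_zero.mpr h12
  have hinj : Set.InjOn (mobius γ u₁ u₂) S := by
    intro ω hω ω' hω' h
    rw [mobius, mobius, div_eq_div_iff (hden ω hω) (hden ω' hω')] at h
    have h' : γ * (u₁ - u₂) * (ω - ω') = 0 := by linear_combination h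
    simpa [hγ, hd, sub_eq_zero] using h'
  have hnot : u₁ ∉ mobius γ u₁ u₂ '' S := by
    rintro ⟨ω, hω, h⟩
    rw [mobius, div_eq_iff (hden ω hω)] at h
    exact hd (by linear_combination -h)
  rw [Set.ncard_insert_of_notMem hnot (hS.image _), hinj.ncard_image]

end Mobius

instance fact_prime_seven : Fact (Nat.Prime 7) := ⟨by norm_num⟩

section ZeroSet

variable {E : Type*} [Field E] {m q : ℕ} {a b : E}

def zeroSet (q : ℕ) (a b : E) : Set E :=
  {u | u ^ (q + 1) = 1 ∧ (a * u ^ 4 + b * u ^ 3) + (a * u ^ 4 + b * u ^ 3) ^ q = 0}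

def coeffMatrix (q : ℕ) (a b : E) : Matrix (Fin 2) (Fin 2) E := !![-b ^ q, -a ^ q; a, b]

theorem mul_add_ne_zero_of_pow_succ_ne (hdet : a ^ (q + 1) ≠ b ^ (q + 1)) {u : E}
    (hP : a * u ^ 8 + b * u ^ 7 + b ^ q * u + a ^ q = 0) : a * u + b ≠ 0 := by
  intro hl
  have hconj : b ^ q * u + a ^ q = 0 := by linear_combination hP - u ^ 7 * hl
  exact hdet (by linear_combination a * hconj - b ^ q * hl)

variable [CharP E 7]

theorem mem_zeroSet_iff (hq : q = 7 ^ m) {u : E} :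
    u ∈ zeroSet q a b ↔ u ^ (q + 1) = 1 ∧ a * u ^ 8 + b * u ^ 7 + b ^ q * u + a ^ q = 0 := by
  refine and_congr_right fun hu => ?_
  have hu0 : u ≠ 0 := by
    rintro rfl
    simp at hu
  have hconj : (a * u ^ 4 + b * u ^ 3) ^ q = a ^ q * (u ^ q) ^ 4 + b ^ q * (u ^ q) ^ 3 := by
    rw [hq, add_pow_char_pow, mul_pow, mul_pow, ← pow_mul, ← pow_mul, mul_comm 4, mul_comm 3,
      pow_mul, pow_mul]
  have hinv : u * u ^ q = 1 := by rwa [← pow_succ']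
  have hP : u ^ 4 * ((a * u ^ 4 + b * u ^ 3) + (a * u ^ 4 + b * u ^ 3) ^ q) =
      a * u ^ 8 + b * u ^ 7 + b ^ q * u + a ^ q := by
    rw [hconj]
    linear_combination (a ^ q * ((u * u ^ q) ^ 3 + (u * u ^ q) ^ 2 + u * u ^ q + 1) +
      b ^ q * u * ((u * u ^ q) ^ 2 + u * u ^ q + 1)) * hinv
  rw [← hP, mul_eq_zero_iff_left (pow_ne_zero 4 hu0)]

theorem coeffMatrix_mulVec_eq_smul_iff (w : Fin 2 → E) (c : E) :
    coeffMatrix q a b *ᵥ w = c • (frobenius E 7 ∘ w) ↔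
      -b ^ q * w 0 - a ^ q * w 1 = c * w 0 ^ 7 ∧ a * w 0 + b * w 1 = c * w 1 ^ 7 := by
  rw [funext_iff, Fin.forall_fin_two]
  simp [coeffMatrix, mulVec, dotProduct, Fin.sum_univ_two, frobenius_def, sub_eq_add_neg]

theorem coeffMatrix_mulVec_of_mem_zeroSet (hq : q = 7 ^ m) {u : E} (hu : u ∈ zeroSet q a b) :
    coeffMatrix q a b *ᵥ ![u, 1] = (a * u + b) • (frobenius E 7 ∘ ![u, 1]) := by
  have hP := ((mem_zeroSet_iff hq).mp hu).2
  refine (coeffMatrix_mulVec_eq_smul_iff _ _).mpr ⟨?_, by simp⟩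
  simp only [cons_val_zero, cons_val_one, cons_val_fin_one, mul_one]
  linear_combination -hP

theorem ncard_zeroSet_zero_le_two (hq : q = 7 ^ m) (hb : b ≠ 0) :
    (zeroSet q 0 b).ncard ≤ 2 := by
  rcases (zeroSet q 0 b).eq_empty_or_nonempty with h | ⟨u₀, hu₀⟩
  · simp [h]
  have hmem : ∀ u ∈ zeroSet q 0 b, u ≠ 0 ∧ b * u ^ 6 = -b ^ q ∧ u ^ (q + 1) = 1 := by
    intro u hu
    obtain ⟨hu1, hP⟩ := (mem_zeroSet_iff hq).mp hu
    have hu0 : u ≠ 0 := by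
      rintro rfl
      simp at hu1
    rw [zero_pow (hq ▸ pow_ne_zero m (by norm_num))] at hP
    have h : u * (b * u ^ 6 + b ^ q) = 0 := by linear_combination hP
    exact ⟨hu0, eq_neg_of_add_eq_zero_left ((mul_eq_zero.mp h).resolve_left hu0), hu1⟩
  have hgcd : Nat.gcd 6 (q + 1) = 2 := by
    rw [Nat.gcd_rec, hq, Nat.add_mod, Nat.pow_mod]
    norm_num
  have hsub : zeroSet q 0 b ⊆ {u₀, -u₀} := by
    intro u hu
    obtain ⟨-, h6, h1⟩ := hmem u hu
    obtain ⟨hu₀0, h₀6, h₀1⟩ := hmem u₀ hu₀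
    have hquot : (u / u₀) ^ Nat.gcd 6 (q + 1) = 1 := by
      refine pow_gcd_eq_one.mpr ⟨?_, by rw [div_pow, h1, h₀1, div_one]⟩
      rw [div_pow, div_eq_one_iff_eq (pow_ne_zero _ hu₀0)]
      exact mul_left_cancel₀ hb (h6.trans h₀6.symm)
    rw [hgcd, div_pow, div_eq_one_iff_eq (pow_ne_zero _ hu₀0)] at hquot
    exact sq_eq_sq_iff_eq_or_eq_neg.mp hquot
  calc (zeroSet q 0 b).ncard ≤ ({u₀, -u₀} : Set E).ncard := Set.ncard_le_ncard hsub
    _ ≤ 2 := (Set.ncard_insert_le _ _).trans (by simp)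

theorem ncard_zeroSet_le_two_of_pow_succ_eq (hq : q = 7 ^ m) (ha : a ≠ 0)
    (hab : a ^ (q + 1) = b ^ (q + 1)) : (zeroSet q a b).ncard ≤ 2 := by
  have hsub : zeroSet q a b ⊆ {u | a * u + b = 0} ∪ {u | a * u ^ 7 + b ^ q = 0} := by
    intro u hu
    have hP := ((mem_zeroSet_iff hq).mp hu).2
    exact mul_eq_zero.mp (by linear_combination a * hP - hab)
  have h₁ : {u : E | a * u + b = 0}.Subsingleton := fun u hu v hv =>
    mul_left_cancel₀ ha (by linear_combination hu.out - hv.out)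
  have h₂ : {u : E | a * u ^ 7 + b ^ q = 0}.Subsingleton := fun u hu v hv =>
    frobenius_inj E 7
      (mul_left_cancel₀ ha (by linear_combination hu.out - hv.out) : u ^ 7 = v ^ 7)
  calc (zeroSet q a b).ncard ≤ _ := Set.ncard_le_ncard hsub (h₁.finite.union h₂.finite)
    _ ≤ _ := Set.ncard_union_le _ _
    _ ≤ 2 := by
      have := (Set.ncard_le_one h₁.finite).mpr h₁
      have := (Set.ncard_le_one h₂.finite).mpr h₂
      omega

theorem exists_twistedProd_coeffMatrix_eq (hq : q = 7 ^ m) {u₁ u₂ u₃ : E}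
    (hu₁ : u₁ ∈ zeroSet q a b) (hu₂ : u₂ ∈ zeroSet q a b) (hu₃ : u₃ ∈ zeroSet q a b)
    (h12 : u₁ ≠ u₂) (h13 : u₁ ≠ u₃) (h23 : u₂ ≠ u₃) :
    ∃ d, twistedProd (frobenius E 7) (coeffMatrix q a b) m = !![0, d; d, 0] := by
  set C := twistedProd (frobenius E 7) (coeffMatrix q a b) m
  have hroot : ∀ u ∈ zeroSet q a b, C 0 0 * u ^ 2 + (C 0 1 - C 1 0) * u + -C 1 1 = 0 := by
    intro u hu
    have hC := congrFun (twistedProd_mulVec (coeffMatrix_mulVec_of_mem_zeroSet hq hu) m)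
    generalize ∏ i ∈ range m, (frobenius E 7 ^ i) (a * u + b) = s at hC
    have h0 := hC 0
    have h1 := hC 1
    simp only [mulVec, dotProduct, Fin.sum_univ_two, cons_val_zero, cons_val_one,
      cons_val_fin_one, mul_one, Pi.smul_apply, Function.comp_apply, RingHom.coe_pow,
      iterate_frobenius, ← hq, smul_eq_mul, one_pow] at h0 h1
    have hinv : u ^ q * u = 1 := by rw [← pow_succ]; exact ((mem_zeroSet_iff hq).mp hu).1
    linear_combination u * h0 - h1 + s * hinv
  obtain ⟨h00, h01, h11⟩ := eq_zero_of_three_roots h12 h13 h23 (hroot u₁ hu₁) (hroot u₂ hu₂)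
    (hroot u₃ hu₃)
  exact ⟨C 0 1, C.eta_fin_two.trans (by rw [h00, neg_eq_zero.mp h11, ← sub_eq_zero.mp h01])⟩

theorem mem_zeroSet_of_mulVec_eq_smul (hq : q = 7 ^ m) {d : E}
    (hC : twistedProd (frobenius E 7) (coeffMatrix q a b) m = !![0, d; d, 0]) {c : E}
    (hc : c ≠ 0) {w : Fin 2 → E} (hw : coeffMatrix q a b *ᵥ w = c • (frobenius E 7 ∘ w))
    (hw₁ : w 1 ≠ 0) : w 0 / w 1 ∈ zeroSet q a b := by
  obtain ⟨hrow₀, hrow₁⟩ := (coeffMatrix_mulVec_eq_smul_iff w c).mp hw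
  have hN := congrFun (twistedProd_mulVec hw m)
  have hs : ∏ i ∈ range m, (frobenius E 7 ^ i) c ≠ 0 :=
    prod_ne_zero_iff.mpr fun i _ => (map_ne_zero _).mpr hc
  generalize ∏ i ∈ range m, (frobenius E 7 ^ i) c = s at hN hs
  have h0 := hN 0
  have h1 := hN 1
  simp only [hC, mulVec, dotProduct, Fin.sum_univ_two, of_apply, cons_val', cons_val_zero,
    cons_val_one, cons_val_fin_one, zero_mul, zero_add, add_zero, Pi.smul_apply,
    Function.comp_apply, RingHom.coe_pow, iterate_frobenius, ← hq, smul_eq_mul] at h0 h1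
  have hnorm : w 0 ^ (q + 1) = w 1 ^ (q + 1) := by
    refine mul_left_cancel₀ hs ?_
    linear_combination w 1 * h1 - w 0 * h0
  refine (mem_zeroSet_iff hq).mpr ⟨by rw [div_pow, hnorm, div_self (pow_ne_zero _ hw₁)], ?_⟩
  field_simp
  linear_combination w 0 ^ 7 * hrow₁ - w 1 ^ 7 * hrow₀

theorem exists_smul_mulVec_eq_smul (hq : q = 7 ^ m) {u₁ u₂ u₃ : E}
    (hu₁ : u₁ ∈ zeroSet q a b) (hu₂ : u₂ ∈ zeroSet q a b) (hu₃ : u₃ ∈ zeroSet q a b)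
    (h12 : u₁ ≠ u₂) (h13 : u₁ ≠ u₃) (h23 : u₂ ≠ u₃) :
    ∃ γ : E, γ ≠ 0 ∧ coeffMatrix q a b *ᵥ (γ • ![u₁, 1]) =
      (a * u₂ + b) • (frobenius E 7 ∘ (γ • ![u₁, 1])) := by
  have hd : u₁ - u₂ ≠ 0 := sub_ne_zero.mpr h12
  have hα : (u₃ - u₂) / (u₁ - u₂) ≠ 0 := div_ne_zero (sub_ne_zero.mpr h23.symm) hd
  have hβ : (u₁ - u₃) / (u₁ - u₂) ≠ 0 := div_ne_zero (sub_ne_zero.mpr h13) hd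
  generalize hαdef : (u₃ - u₂) / (u₁ - u₂) = α at hα
  generalize hβdef : (u₁ - u₃) / (u₁ - u₂) = β at hβ
  have hsum : α + β = 1 := by
    rw [← hαdef, ← hβdef]
    field_simp
    ring
  have hcomb : α * u₁ + β * u₂ = u₃ := by
    rw [← hαdef, ← hβdef]
    field_simp
    ring
  have hu₃' : ![u₃, 1] = α • ![u₁, 1] + β • ![u₂, 1] := by
    rw [smul_vecCons_one_add_smul, hcomb, hsum]
  have hind : LinearIndependent E ![frobenius E 7 ∘ ![u₁, 1], frobenius E 7 ∘ ![u₂, 1]] := by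
    simpa using linearIndependent_comp_smul_vecCons_one (frobenius E 7) one_ne_zero h12
  have h₃ := coeffMatrix_mulVec_of_mem_zeroSet hq hu₃
  rw [hu₃'] at h₃
  obtain ⟨hα₁, hβ₂⟩ := (mulVec_add_eq_smul_comp_iff (coeffMatrix_mulVec_of_mem_zeroSet hq hu₁)
    (coeffMatrix_mulVec_of_mem_zeroSet hq hu₂) hind).mp h₃
  refine ⟨α / β, div_ne_zero hα hβ, mulVec_smul_eq_smul_comp
    (coeffMatrix_mulVec_of_mem_zeroSet hq hu₁) ?_⟩
  simp only [frobenius_def, div_pow] at hα₁ hβ₂ ⊢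
  field_simp
  refine mul_left_cancel₀ (mul_ne_zero hα hβ) ?_
  linear_combination β ^ 7 * hα₁ - α ^ 7 * hβ₂

theorem mobius_mem_zeroSet (hq : q = 7 ^ m) (ha : a ≠ 0) {d : E}
    (hC : twistedProd (frobenius E 7) (coeffMatrix q a b) m = !![0, d; d, 0])
    {u₁ u₂ γ : E} (hu₂ : u₂ ∈ zeroSet q a b) (hl₂ : a * u₂ + b ≠ 0) (h12 : u₁ ≠ u₂)
    (hv : coeffMatrix q a b *ᵥ (γ • ![u₁, 1]) =
      (a * u₂ + b) • (frobenius E 7 ∘ (γ • ![u₁, 1])))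
    {ω : E} (hω : ω ^ 7 = ω) :
    ω * γ + 1 ≠ 0 ∧ mobius γ u₁ u₂ ω ∈ zeroSet q a b := by
  have hw := mulVec_add_eq_smul_comp (x := ω) (y := 1) hv
    (coeffMatrix_mulVec_of_mem_zeroSet hq hu₂) (by rw [frobenius_def, hω, mul_comm]) (by simp)
  have hw' : ω • (γ • ![u₁, 1]) + (1 : E) • ![u₂, 1] = ![ω * γ * u₁ + u₂, ω * γ + 1] := by
    rw [smul_smul, smul_vecCons_one_add_smul, one_mul]
  rw [hw'] at hw
  have hden : ω * γ + 1 ≠ 0 := by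
    intro h0
    have hrow := ((coeffMatrix_mulVec_eq_smul_iff _ _).mp hw).2
    simp only [cons_val_zero, cons_val_one] at hrow
    have h : a * (u₂ - u₁) = 0 := by
      linear_combination hrow - (a * u₁ + b - (a * u₂ + b) * (ω * γ + 1) ^ 6) * h0
    simp [ha, sub_eq_zero, h12.symm] at h
  exact ⟨hden, mem_zeroSet_of_mulVec_eq_smul hq hC hl₂ hw (by simpa using hden)⟩

theorem mem_insert_mobius_of_mem_zeroSet (hq : q = 7 ^ m) (hdet : a ^ (q + 1) ≠ b ^ (q + 1))
    {u₁ u₂ γ : E} (hu₂ : u₂ ∈ zeroSet q a b) (h12 : u₁ ≠ u₂) (hγ : γ ≠ 0)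
    (hv : coeffMatrix q a b *ᵥ (γ • ![u₁, 1]) =
      (a * u₂ + b) • (frobenius E 7 ∘ (γ • ![u₁, 1])))
    {u : E} (hu : u ∈ zeroSet q a b) :
    u ∈ insert u₁ (mobius γ u₁ u₂ '' {ω | ω ^ 7 = ω}) := by
  have hd : u₁ - u₂ ≠ 0 := sub_ne_zero.mpr h12
  set x := (u - u₂) / (γ * (u₁ - u₂))
  set y := (u₁ - u) / (u₁ - u₂)
  have hsum : x * γ + y = 1 := by
    simp only [x, y]
    field_simp
    ring
  have hcomb : x * γ * u₁ + y * u₂ = u := by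
    simp only [x, y]
    field_simp
    ring
  have hu' : ![u, 1] = x • (γ • ![u₁, 1]) + y • ![u₂, 1] := by
    rw [smul_smul, smul_vecCons_one_add_smul, hcomb, hsum]
  have h := coeffMatrix_mulVec_of_mem_zeroSet hq hu
  rw [hu'] at h
  obtain ⟨hx, hy⟩ := (mulVec_add_eq_smul_comp_iff hv (coeffMatrix_mulVec_of_mem_zeroSet hq hu₂)
    (linearIndependent_comp_smul_vecCons_one (frobenius E 7) hγ h12)).mp h
  simp only [frobenius_def] at hx hy
  by_cases hy0 : y = 0
  · left
    simpa [y, hd, sub_eq_zero, eq_comm] using hy0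
  right
  refine ⟨x / y, ?_, ?_⟩
  · have hl := mul_add_ne_zero_of_pow_succ_ne hdet ((mem_zeroSet_iff hq).mp hu).2
    rw [Set.mem_ofPred_eq, div_pow, div_eq_div_iff (pow_ne_zero 7 hy0) hy0]
    exact mul_left_cancel₀ hl (by linear_combination x * hy - y * hx)
  · have hu₁ : u₁ - u ≠ 0 := fun h0 => hy0 (by simp [y, h0])
    have hxy : x / y * γ = (u - u₂) / (u₁ - u) := by
      simp only [x, y]
      field_simp
    have hden : (u - u₂) / (u₁ - u) + 1 = (u₁ - u₂) / (u₁ - u) := by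
      field_simp
      ring
    rw [mobius, hxy, hden, div_eq_iff (div_ne_zero hd hu₁)]
    field_simp
    ring

theorem ncard_zeroSet_eq_eight (hq : q = 7 ^ m) (ha : a ≠ 0) (hdet : a ^ (q + 1) ≠ b ^ (q + 1))
    {u₁ u₂ u₃ : E} (hu₁ : u₁ ∈ zeroSet q a b) (hu₂ : u₂ ∈ zeroSet q a b)
    (hu₃ : u₃ ∈ zeroSet q a b) (h12 : u₁ ≠ u₂) (h13 : u₁ ≠ u₃) (h23 : u₂ ≠ u₃) :
    (zeroSet q a b).ncard = 8 := by
  obtain ⟨d, hC⟩ := exists_twistedProd_coeffMatrix_eq hq hu₁ hu₂ hu₃ h12 h13 h23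
  obtain ⟨γ, hγ, hv⟩ := exists_smul_mulVec_eq_smul hq hu₁ hu₂ hu₃ h12 h13 h23
  have hl₂ := mul_add_ne_zero_of_pow_succ_ne hdet ((mem_zeroSet_iff hq).mp hu₂).2
  have hmob (ω : E) (hω : ω ∈ {ω : E | ω ^ 7 = ω}) :=
    mobius_mem_zeroSet hq ha hC hu₂ hl₂ h12 hv hω
  have hZ : zeroSet q a b = insert u₁ (mobius γ u₁ u₂ '' {ω | ω ^ 7 = ω}) :=
    Set.Subset.antisymm (fun u hu => mem_insert_mobius_of_mem_zeroSet hq hdet hu₂ h12 hγ hv hu)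
      (Set.insert_subset hu₁ (Set.image_subset_iff.mpr fun ω hω => (hmob ω hω).2))
  have hF := ncard_setOf_pow_char_eq_self E 7
  rw [hZ, ncard_insert_image_mobius hγ h12 (Set.finite_of_ncard_pos (by omega))
    (fun ω hω => (hmob ω hω).1), hF]

end ZeroSet

theorem stmt_6_general {m : ℕ} (q : ℕ) (hq : q = 7 ^ m)
    {E : Type*} [Field E] [Fintype E] (hE : Fintype.card E = q ^ 2)
    (a b : E) (hab : ¬(a = 0 ∧ b = 0))
    (h3 : 3 ≤ {u : E | u ^ (q + 1) = 1 ∧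
      (a * u ^ 4 + b * u ^ 3) + (a * u ^ 4 + b * u ^ 3) ^ q = 0}.ncard) :
    {u : E | u ^ (q + 1) = 1 ∧
      (a * u ^ 4 + b * u ^ 3) + (a * u ^ 4 + b * u ^ 3) ^ q = 0}.ncard = 8 := by
  have : CharP E 7 := charP_of_card_eq_prime_pow (hE.trans (by rw [hq, ← pow_mul]))
  change 3 ≤ (zeroSet q a b).ncard at h3
  change (zeroSet q a b).ncard = 8
  obtain ⟨u₁, hu₁, u₂, hu₂, u₃, hu₃, h12, h13, h23⟩ := (Set.two_lt_ncard (Set.toFinite _)).mp h3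
  have ha : a ≠ 0 := by
    rintro rfl
    have := ncard_zeroSet_zero_le_two hq fun hb => hab ⟨rfl, hb⟩
    omega
  have hdet : a ^ (q + 1) ≠ b ^ (q + 1) := fun h => by
    have := ncard_zeroSet_le_two_of_pow_succ_eq hq ha h
    omega
  exact ncard_zeroSet_eq_eight hq ha hdet hu₁ hu₂ hu₃ h12 h13 h23

/-- Lemma 4, second part: if the zero set of f(u) = Tr(au⁴ + bu³) on U has at least
3 elements, then it has exactly 8 elements. -/
theorem stmt_6 {m : ℕ} (hm : 2 ≤ m) (q : ℕ) (hq : q = 7 ^ m)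
    {E : Type*} [Field E] [Fintype E] (hE : Fintype.card E = q ^ 2)
    (a b : E) (hab : ¬(a = 0 ∧ b = 0))
    (h3 : 3 ≤ {u : E | u ^ (q + 1) = 1 ∧
      (a * u ^ 4 + b * u ^ 3) + (a * u ^ 4 + b * u ^ 3) ^ q = 0}.ncard) :
    {u : E | u ^ (q + 1) = 1 ∧
      (a * u ^ 4 + b * u ^ 3) + (a * u ^ 4 + b * u ^ 3) ^ q = 0}.ncard = 8 :=
  stmt_6_general q hq hE a b hab h3
end

section
/- The map φ : E × E → (U → E) given by φ(a,b) = (u ↦ Tr(au⁴ + bu³)) is injective; consequently the code C_m = { (Tr(au⁴+bu³))_{u∈U} : a, b ∈ E } contains exactly q⁴ codewords, i.e., C_m has dimension 4 as a linear code over the subfield GF(q). -/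
/-!
Write `Tr x = x + x ^ q`. Since `|E| = q²`, the map `x ↦ x ^ q` is a power of the Frobenius, hence
additive, so it suffices that `Tr (c u⁴ + d u³) = 0` for all `u ∈ U` forces `c = d = 0`. On `U` we
have `u ^ q = u⁻¹`, so multiplying by `u⁴` turns this into the vanishing on `U` of the polynomial
`c X⁸ + d X⁷ + d^q X + c^q` of degree at most `8`. As `q + 1 ∣ q² - 1`, the cyclic group `Eˣ`
contains `q + 1 ≥ 9` elements of `U`, so this polynomial is zero.
-/

open Polynomial Finset

namespace FiniteField

variable {E : Type*} [Field E] [Fintype E] {q : ℕ}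

theorem exists_ringHom_eq_pow_of_card_eq_sq (hE : Fintype.card E = q ^ 2) :
    ∃ φ : E →+* E, ∀ x, φ x = x ^ q := by
  obtain ⟨n, hp, hcard⟩ := FiniteField.card E (ringChar E)
  obtain ⟨i, -, rfl⟩ :=
    (Nat.dvd_prime_pow hp).mp (hcard ▸ hE ▸ dvd_pow_self q two_ne_zero)
  have := ringChar.charP E
  have : Fact (ringChar E).Prime := ⟨hp⟩
  exact ⟨iterateFrobenius E (ringChar E) i, iterateFrobenius_def _ _⟩

theorem card_nthRootsFinset_one_of_dvd [DecidableEq E] {n : ℕ} (hn : n ∣ Fintype.card E - 1) :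
    #(nthRootsFinset n (1 : E)) = n := by
  obtain ⟨k, hk⟩ := hn
  obtain ⟨g, hg⟩ := IsCyclic.exists_ofOrder_eq_natCard (α := Eˣ)
  have hζ : IsPrimitiveRoot (g : E) (Fintype.card E - 1) := by
    rw [← Fintype.card_units, ← Nat.card_eq_fintype_card, ← hg, ← orderOf_units]
    exact IsPrimitiveRoot.orderOf _
  have hpos : 0 < Fintype.card E - 1 := Nat.sub_pos_of_lt Fintype.one_lt_card
  exact (hζ.pow hpos (hk.trans (mul_comm _ _))).card_nthRootsFinset

theorem card_nthRootsFinset_succ_of_card_eq_sq [DecidableEq E] (hE : Fintype.card E = q ^ 2) :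
    #(nthRootsFinset (q + 1) (1 : E)) = q + 1 :=
  card_nthRootsFinset_one_of_dvd (hE ▸ Dvd.intro _ (Nat.sq_sub_sq q 1).symm)

theorem eq_zero_of_forall_trace_eq_zero (hE : Fintype.card E = q ^ 2) (hq : 8 ≤ q) {c d : E}
    (h : ∀ u : E, u ^ (q + 1) = 1 → (c * u ^ 4 + d * u ^ 3) + (c * u ^ 4 + d * u ^ 3) ^ q = 0) :
    c = 0 ∧ d = 0 := by
  classical
  obtain ⟨φ, hφ⟩ := exists_ringHom_eq_pow_of_card_eq_sq hE
  set P : E[X] := C c * X ^ 8 + C d * X ^ 7 + C (d ^ q) * X + C (c ^ q)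
  have hroot : ∀ u ∈ nthRootsFinset (q + 1) (1 : E), P.eval u = 0 := by
    intro u hu
    rw [mem_nthRootsFinset q.succ_pos] at hu
    have hfrob : (c * u ^ 4 + d * u ^ 3) ^ q = c ^ q * (u ^ q) ^ 4 + d ^ q * (u ^ q) ^ 3 := by
      simp only [← hφ, map_add, map_mul, map_pow]
    have hw : u ^ q * u = 1 := (pow_succ u q).symm.trans hu
    set w := u ^ q * u
    calc P.eval u = u ^ 4 * ((c * u ^ 4 + d * u ^ 3) + (c * u ^ 4 + d * u ^ 3) ^ q) := by
          simp only [P, eval_add, eval_mul, eval_pow, eval_C, eval_X, hfrob]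
          linear_combination
            (-(c ^ q * (w ^ 3 + w ^ 2 + w + 1) + d ^ q * u * (w ^ 2 + w + 1))) * hw
      _ = 0 := by rw [h u hu, mul_zero]
  have hP : P = 0 := eq_zero_of_natDegree_lt_card_of_eval_eq_zero' P _ hroot <| by
    rw [card_nthRootsFinset_succ_of_card_eq_sq hE]
    have : P.natDegree ≤ 8 := by simp only [P]; compute_degree
    omega
  constructor
  · simpa [P, coeff_X_pow, coeff_X, coeff_C, -map_pow] using congr_arg (coeff · 8) hP
  · simpa [P, coeff_X_pow, coeff_X, coeff_C, -map_pow] using congr_arg (coeff · 7) hP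

theorem injective_trace_code (hE : Fintype.card E = q ^ 2) (hq : 8 ≤ q) :
    Function.Injective fun p : E × E => fun u : {u : E // u ^ (q + 1) = 1} =>
      (p.1 * (u : E) ^ 4 + p.2 * (u : E) ^ 3) + (p.1 * (u : E) ^ 4 + p.2 * (u : E) ^ 3) ^ q := by
  rintro ⟨a, b⟩ ⟨a', b'⟩ hab
  obtain ⟨φ, hφ⟩ := exists_ringHom_eq_pow_of_card_eq_sq hE
  suffices a - a' = 0 ∧ b - b' = 0 by simpa [sub_eq_zero] using this
  refine eq_zero_of_forall_trace_eq_zero hE hq fun u hu => ?_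
  have huab := congr_fun hab ⟨u, hu⟩
  simp only [← hφ] at huab ⊢
  rw [show (a - a') * u ^ 4 + (b - b') * u ^ 3 = (a * u ^ 4 + b * u ^ 3) - (a' * u ^ 4 + b' * u ^ 3)
    by ring, map_sub]
  linear_combination huab

end FiniteField

theorem stmt_8_general {m : ℕ} (hm : 2 ≤ m) (q : ℕ) (hq : q = 7 ^ m)
    {E : Type*} [Field E] [Fintype E] (hE : Fintype.card E = q ^ 2) :
    Function.Injective
      (fun p : E × E => fun u : {u : E // u ^ (q + 1) = 1} =>
        (p.1 * (u : E) ^ 4 + p.2 * (u : E) ^ 3) +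
          (p.1 * (u : E) ^ 4 + p.2 * (u : E) ^ 3) ^ q) ∧
    (Set.range
      (fun p : E × E => fun u : {u : E // u ^ (q + 1) = 1} =>
        (p.1 * (u : E) ^ 4 + p.2 * (u : E) ^ 3) +
          (p.1 * (u : E) ^ 4 + p.2 * (u : E) ^ 3) ^ q)).ncard = q ^ 4 := by
  have h8 : 8 ≤ q := hq ▸ (by norm_num : 8 ≤ 7 ^ 2).trans (Nat.pow_le_pow_right (by norm_num) hm)
  have hinj := FiniteField.injective_trace_code hE h8
  refine ⟨hinj, ?_⟩
  rw [← Nat.card_coe_set_eq, Nat.card_range_of_injective hinj, Nat.card_eq_fintype_card,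
    Fintype.card_prod, hE]
  ring

/-- the map (a,b) ↦ (Tr(au⁴+bu³))_{u∈U} is injective, hence the code
C_m has exactly q⁴ codewords (dimension 4 over GF(q)). -/
theorem stmt_8 {m : ℕ} (hm : 2 ≤ m) (q : ℕ) (hq : q = 7 ^ m)
    {E : Type*} [Field E] [Fintype E] [DecidableEq E] (hE : Fintype.card E = q ^ 2) :
    Function.Injective
      (fun p : E × E => fun u : {u : E // u ^ (q + 1) = 1} =>
        (p.1 * (u : E) ^ 4 + p.2 * (u : E) ^ 3) +
          (p.1 * (u : E) ^ 4 + p.2 * (u : E) ^ 3) ^ q) ∧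
    (Set.range
      (fun p : E × E => fun u : {u : E // u ^ (q + 1) = 1} =>
        (p.1 * (u : E) ^ 4 + p.2 * (u : E) ^ 3) +
          (p.1 * (u : E) ^ 4 + p.2 * (u : E) ^ 3) ^ q)).ncard = q ^ 4 :=
  stmt_8_general hm q hq hE
end

section
/- Let β₁, β₂ ∈ E with β₁^{q+1} ≠ β₂^{q+1}, and let a, b ∈ E. Then there exist a', b' ∈ E such that for every u ∈ U one has β₁u + β₂ ≠ 0 and (β₁u + β₂)^{4(q+1)} · Tr( a·σ(u)⁴ + b·σ(u)³ ) = Tr( a'u⁴ + b'u³ ), where σ(u) = (β₂^q u + β₁^q)/(β₁u + β₂). -/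
private lemma key_poly {R : Type*} [CommRing R] [Fact (Nat.Prime 7)] [CharP R 7]
    (u b1 b2 c1 c2 a fa b fb : R) :
    a*(c2*u+c1)^8 + b*(c2*u+c1)^7*(b1*u+b2) + fa*(b1*u+b2)^8 + fb*(c2*u+c1)*(b1*u+b2)^7
    = (a*c2^8 + fa*b1^8 + b*c2^7*b1 + fb*c2*b1^7)*u^8
      + (a*c2^7*c1 + fa*b1^7*b2 + b*c2^7*b2 + fb*c1*b1^7)*u^7
      + (a*c1^7*c2 + fa*b2^7*b1 + b*c1^7*b1 + fb*c2*b2^7)*u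
      + (a*c1^8 + fa*b2^8 + b*c1^7*b2 + fb*c1*b2^7) := by
  have h1 : (c2*u+c1)^7 = (c2*u)^7 + c1^7 := add_pow_char ..
  have h2 : (b1*u+b2)^7 = (b1*u)^7 + b2^7 := add_pow_char ..
  have h8c : (c2*u+c1)^8 = ((c2*u)^7+c1^7)*(c2*u+c1) := by rw [pow_succ, h1]
  have h8b : (b1*u+b2)^8 = ((b1*u)^7+b2^7)*(b1*u+b2) := by rw [pow_succ, h2]
  rw [h8c, h8b, h1, h2]; ring

private lemma aux_lhs {F : Type*} [Field F] (v C D a b fa fb : F)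
    (hC : C ≠ 0) (hD : D ≠ 0) :
    (C * v) ^ 4 * D ^ 4 *
      (a * (C / D) ^ 4 + b * (C / D) ^ 3 + (fa * (D / C) ^ 4 + fb * (D / C) ^ 3)) =
    v ^ 4 * (a * C ^ 8 + b * C ^ 7 * D + fa * D ^ 8 + fb * C * D ^ 7) := by
  field_simp
  ring

private lemma aux_rhs {F : Type*} [Field F] (u p1 p2 p3 p4 : F) (hu : u ≠ 0) :
    u⁻¹ ^ 4 * (p1 * u ^ 8 + p2 * u ^ 7 + p3 * u + p4) =
    p1 * u ^ 4 + p2 * u ^ 3 + (p4 * u⁻¹ ^ 4 + p3 * u⁻¹ ^ 3) := by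
  field_simp
  ring

/-- Lemma 6: the space of functions u ↦ Tr(au⁴+bu³) on U is invariant
under the twisted action of the stabilizer of U: with σ(u) = (β₂^q u + β₁^q)/(β₁u + β₂),
the function u ↦ (β₁u+β₂)^{4(q+1)}·Tr(aσ(u)⁴+bσ(u)³) is again of the form
u ↦ Tr(a'u⁴+b'u³) on U. -/
theorem stmt_17 {m : ℕ} (hm : 2 ≤ m) (q : ℕ) (hq : q = 7 ^ m)
    {E : Type*} [Field E] [Fintype E] (hE : Fintype.card E = q ^ 2)
    (β₁ β₂ : E) (hβ : β₁ ^ (q + 1) ≠ β₂ ^ (q + 1)) (a b : E) :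
    ∃ a' b' : E, ∀ u : E, u ^ (q + 1) = 1 →
      β₁ * u + β₂ ≠ 0 ∧
      (β₁ * u + β₂) ^ (4 * (q + 1)) *
        ((a * ((β₂ ^ q * u + β₁ ^ q) / (β₁ * u + β₂)) ^ 4 +
            b * ((β₂ ^ q * u + β₁ ^ q) / (β₁ * u + β₂)) ^ 3) +
          (a * ((β₂ ^ q * u + β₁ ^ q) / (β₁ * u + β₂)) ^ 4 +
            b * ((β₂ ^ q * u + β₁ ^ q) / (β₁ * u + β₂)) ^ 3) ^ q) =
      (a' * u ^ 4 + b' * u ^ 3) + (a' * u ^ 4 + b' * u ^ 3) ^ q := by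
  haveI hp7 : Fact (Nat.Prime 7) := ⟨by norm_num⟩
  have hchar : CharP E 7 := by
    obtain ⟨p, hpi⟩ := CharP.exists E
    haveI := hpi
    obtain ⟨n, hp, hcard⟩ := FiniteField.card E p
    have h7 : p = 7 := by
      have hd : p ∣ 7 ^ (m * 2) := by
        rw [pow_mul, ← hq, ← hE, hcard]
        exact dvd_pow_self p n.ne_zero
      exact (Nat.prime_dvd_prime_iff_eq hp (by norm_num)).mp (hp.dvd_of_dvd_pow hd)
    rwa [h7] at hpi
  haveI := hchar
  set f : E →+* E := iterateFrobenius E 7 m with hfdef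
  have fdef : ∀ x : E, x ^ q = f x := fun x => by rw [hq]; rfl
  have hff : ∀ x : E, f (f x) = x := fun x => by
    have h : f (f x) = x ^ q ^ 2 := by rw [← fdef, ← fdef, ← pow_mul, sq]
    rw [h, ← hE, FiniteField.pow_card]
  refine ⟨a * f β₂ ^ 8 + f a * β₁ ^ 8 + b * f β₂ ^ 7 * β₁ + f b * f β₂ * β₁ ^ 7,
      a * f β₂ ^ 7 * f β₁ + f a * β₁ ^ 7 * β₂ + b * f β₂ ^ 7 * β₂ + f b * f β₁ * β₁ ^ 7,
      fun u hu => ?_⟩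
  have hu0 : u ≠ 0 := by
    intro h; rw [h, zero_pow (Nat.succ_ne_zero q)] at hu; exact zero_ne_one hu
  have hD : β₁ * u + β₂ ≠ 0 := by
    intro h
    apply hβ
    have heven : Even (q + 1) := by
      rw [hq]; exact (Odd.pow (by decide : Odd 7)).add_one
    rw [eq_neg_of_add_eq_zero_right h, Even.neg_pow heven, mul_pow, hu, mul_one]
  have hmul : u * f u = 1 := by rw [← fdef, ← pow_succ']; exact hu
  have hfu : f u = u⁻¹ := eq_inv_of_mul_eq_one_left (by rw [mul_comm]; exact hmul)
  refine ⟨hD, ?_⟩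
  have hfD : f β₁ * u⁻¹ + f β₂ ≠ 0 := by
    have h : f (β₁ * u + β₂) = f β₁ * u⁻¹ + f β₂ := by rw [map_add, map_mul, hfu]
    rw [← h]; exact (map_ne_zero f).mpr hD
  have key := key_poly u β₁ β₂ (f β₁) (f β₂) a (f a) b (f b)
  simp only [show 4 * (q + 1) = q * 4 + 4 from by ring, pow_add, pow_mul, fdef]
  simp only [map_add, map_mul, map_pow, map_div₀, hff, hfu]
  have e1 : β₂ * u⁻¹ + β₁ = (β₁ * u + β₂) * u⁻¹ := by field_simp; ring
  have e2 : f β₁ * u⁻¹ + f β₂ = (f β₂ * u + f β₁) * u⁻¹ := by field_simp; ring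
  have hC : f β₂ * u + f β₁ ≠ 0 := by
    rw [e2] at hfD; exact fun h => hfD (by rw [h, zero_mul])
  rw [e1, e2, mul_div_mul_right _ _ (inv_ne_zero hu0)]
  trans (u⁻¹ ^ 4 * (a * (f β₂ * u + f β₁) ^ 8 + b * (f β₂ * u + f β₁) ^ 7 * (β₁ * u + β₂)
      + f a * (β₁ * u + β₂) ^ 8 + f b * (f β₂ * u + f β₁) * (β₁ * u + β₂) ^ 7))
  · exact aux_lhs u⁻¹ (f β₂ * u + f β₁) (β₁ * u + β₂) a b (f a) (f b) hC hD
  · rw [key]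
    linear_combination aux_rhs u
      (a * f β₂ ^ 8 + f a * β₁ ^ 8 + b * f β₂ ^ 7 * β₁ + f b * f β₂ * β₁ ^ 7)
      (a * f β₂ ^ 7 * f β₁ + f a * β₁ ^ 7 * β₂ + b * f β₂ ^ 7 * β₂ + f b * f β₁ * β₁ ^ 7)
      (a * f β₁ ^ 7 * f β₂ + f a * β₂ ^ 7 * β₁ + b * f β₁ ^ 7 * β₁ + f b * f β₂ * β₂ ^ 7)
      (a * f β₁ ^ 8 + f a * β₂ ^ 8 + b * f β₁ ^ 7 * β₂ + f b * f β₁ * β₂ ^ 7) hu0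
end
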